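/- arXiv:1104.3541 — 3 statements merged into one kernel-verified Lean document; each statement's English description precedes it below -/
import Mathlib

section
/- Let S be an abelian semigroup with zero element 0_S and g a Lie algebra. The subspace {0_S} × g is an ideal of the S-expanded Lie algebra S × g, so the quotient (S × g)/({0_S} × g) is a Lie algebra (the 0_S-reduced algebra). -/
/-- The bracket of the `S`-expanded algebra `S × g`, realized on `S → g`. -/
def exBracket (S : Type*) [Mul S] [Fintype S] [DecidableEq S]
    (g : Type*) [LieRing g] (f₁ f₂ : S → g) : S → g :=
  fun γ => ∑ p : S × S, if p.1 * p.2 = γ then ⁅f₁ p.1, f₂ p.2⁆ else 0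

/-- The basis element `λ ⊗ x` of `S × g`, as the function supported at `λ`. -/
def basE {S : Type*} [DecidableEq S] {g : Type*} [Zero g] (l : S) (x : g) : S → g :=
  fun μ => if μ = l then x else 0

section Aux

variable {S : Type*} [Mul S] [Fintype S] [DecidableEq S] {g : Type*} [LieRing g]

lemma exBracket_key1 (z : S) (hz : ∀ s : S, z * s = z ∧ s * z = z) (f₁ : S → g) (x : g) :
    exBracket S g f₁ (basE z x) = basE z (∑ l : S, ⁅f₁ l, x⁆) := by
  funext γ
  simp only [exBracket, basE, Fintype.sum_prod_type]
  have h1 : ∀ a : S, (∑ b : S, if a * b = γ then ⁅f₁ a, if b = z then x else 0⁆ else 0)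
      = if γ = z then ⁅f₁ a, x⁆ else 0 := by
    intro a
    rw [Finset.sum_eq_single z]
    · rw [(hz a).2]
      simp [eq_comm]
    · intro b _ hb
      simp [hb]
    · simp
  simp only [h1]
  by_cases h : γ = z <;> simp [h]

lemma exBracket_key2 (z : S) (hz : ∀ s : S, z * s = z ∧ s * z = z) (f₁ : S → g) (x : g) :
    exBracket S g (basE z x) f₁ = basE z (∑ l : S, ⁅x, f₁ l⁆) := by
  funext γ
  simp only [exBracket, basE, Fintype.sum_prod_type_right]
  have h1 : ∀ b : S, (∑ a : S, if a * b = γ then ⁅if a = z then x else 0, f₁ b⁆ else 0)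
      = if γ = z then ⁅x, f₁ b⁆ else 0 := by
    intro b
    rw [Finset.sum_eq_single z]
    · rw [(hz b).1]
      simp [eq_comm]
    · intro a _ ha
      simp [ha]
    · simp
  simp only [h1]
  by_cases h : γ = z <;> simp [h]

lemma exBracket_add_right (f₁ a b : S → g) :
    exBracket S g f₁ (a + b) = exBracket S g f₁ a + exBracket S g f₁ b := by
  funext γ
  simp [exBracket, ite_add_zero, Finset.sum_add_distrib]

lemma exBracket_add_left (f₁ a b : S → g) :
    exBracket S g (a + b) f₁ = exBracket S g a f₁ + exBracket S g b f₁ := by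
  funext γ
  simp [exBracket, ite_add_zero, Finset.sum_add_distrib]

lemma exBracket_zero_right (f₁ : S → g) : exBracket S g f₁ 0 = 0 := by
  funext γ; simp [exBracket]

lemma exBracket_zero_left (f₁ : S → g) : exBracket S g 0 f₁ = 0 := by
  funext γ; simp [exBracket]

lemma exBracket_smul_right {K : Type*} [Field K] [LieAlgebra K g] (c : K) (f₁ a : S → g) :
    exBracket S g f₁ (c • a) = c • exBracket S g f₁ a := by
  funext γ
  simp [exBracket, Finset.smul_sum, smul_ite]

lemma exBracket_smul_left {K : Type*} [Field K] [LieAlgebra K g] (c : K) (f₁ a : S → g) :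
    exBracket S g (c • a) f₁ = c • exBracket S g a f₁ := by
  funext γ
  simp [exBracket, Finset.smul_sum, smul_ite]

end Aux

/-- Let `S` be an abelian semigroup with zero element `0_S` and `g` a Lie algebra.
The subspace `{0_S} × g` is an ideal of the `S`-expanded Lie algebra `S × g`
(so the quotient is a Lie algebra, the `0_S`-reduced algebra). -/
theorem stmt5 (K : Type*) [Field K] (S : Type*) [CommSemigroup S] [Fintype S]
    [DecidableEq S] (g : Type*) [LieRing g] [LieAlgebra K g]
    (z : S) (hz : ∀ s : S, z * s = z ∧ s * z = z) :
    ∀ f₁ : S → g,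
      ∀ f₂ ∈ Submodule.span K ({f | ∃ x : g, f = basE z x} : Set (S → g)),
        exBracket S g f₁ f₂ ∈
            Submodule.span K ({f | ∃ x : g, f = basE z x} : Set (S → g)) ∧
        exBracket S g f₂ f₁ ∈
            Submodule.span K ({f | ∃ x : g, f = basE z x} : Set (S → g)) := by
  intro f₁ f₂ hf₂
  induction hf₂ using Submodule.span_induction with
  | mem f hf =>
    obtain ⟨x, rfl⟩ := hf
    constructor
    · rw [exBracket_key1 z hz]
      exact Submodule.subset_span ⟨_, rfl⟩
    · rw [exBracket_key2 z hz]
      exact Submodule.subset_span ⟨_, rfl⟩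
  | zero =>
    rw [exBracket_zero_right, exBracket_zero_left]
    simp
  | add a b _ _ ha hb =>
    rw [exBracket_add_right, exBracket_add_left]
    exact ⟨Submodule.add_mem _ ha.1 hb.1, Submodule.add_mem _ ha.2 hb.2⟩
  | smul c a _ ha =>
    rw [exBracket_smul_right, exBracket_smul_left]
    exact ⟨Submodule.smul_mem _ _ ha.1, Submodule.smul_mem _ _ ha.2⟩
end

section
/- Let g be the 2-dimensional Lie algebra with [X₁,X₂] = X₁, graded by V₀ = span{X₂}, V₁ = span{X₁}. Using the semigroup S_N3 (λ1λ2=λ1, λ2λ2=λ2, λ2λ3=λ3, all other products λ4, with λ4 zero) with resonant decomposition S₀={λ2,λ4}, S₁={λ1,λ3,λ4}, the 0_S-reduced resonant subalgebra has basis Y₁=λ1⊗X₁, Y₂=λ3⊗X₁, Y₃=λ2⊗X₂ satisfying [Y₁,Y₂]=0, [Y₁,Y₃]=Y₁, [Y₂,Y₃]=Y₂, i.e., it is isomorphic to the Bianchi type V algebra. -/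
/-- The multiplication table of the semigroup `S_N3` on `{λ1,...,λ4}`, encoded
with `λ_{i+1} ↔ (i : Fin 4)`. -/
def mulSN3 : Fin 4 → Fin 4 → Fin 4 :=
  ![![3, 0, 3, 3],
    ![0, 1, 2, 3],
    ![3, 2, 3, 3],
    ![3, 3, 3, 3]]

/-- The bracket of the expanded algebra on `Fin 4 → g` associated to an explicit
multiplication table `mul`. -/
def exBr (mul : Fin 4 → Fin 4 → Fin 4) {g : Type*} [LieRing g]
    (f₁ f₂ : Fin 4 → g) : Fin 4 → g :=
  fun γ => ∑ p : Fin 4 × Fin 4, if mul p.1 p.2 = γ then ⁅f₁ p.1, f₂ p.2⁆ else 0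

/-!
The bracket of `λ_a ⊗ x` and `λ_b ⊗ y` is `λ_{ab} ⊗ ⁅x, y⁆`, so the three relations are read off
the table of `S_N3` and `⁅X₁, X₂⁆ = X₁`. Restriction to the coordinates `λ1, λ3, λ2` kills
`λ4 ⊗ g`, so it factors through the quotient; it sends `Y₁, Y₂, Y₃` to nonzero vectors supported
at distinct coordinates, which are independent. The generators `λ4 ⊗ Xᵢ` of the resonant
subalgebra vanish in the quotient, which gives the span.
-/

open Submodule Function

section
variable {S M : Type*} [DecidableEq S]

theorem basE_eq_single [Zero M] (l : S) (x : M) : basE l x = Pi.single l x := by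
  ext μ
  simp [basE, Pi.single_apply]

variable {R : Type*} [Ring R] [AddCommGroup M] [Module R M]

theorem mkQ_basE_self (s : S) (x : M) :
    (span R {f | ∃ y : M, f = basE s y}).mkQ (basE s x) = 0 :=
  (Submodule.Quotient.mk_eq_zero _).2 (subset_span ⟨x, rfl⟩)

theorem linearIndependent_mkQ_basE [IsDomain R] [Module.IsTorsionFree R M] {ι : Type*}
    {s : S} {l : ι → S} (hl : Injective l) (hs : ∀ i, l i ≠ s) {x : ι → M}
    (hx : ∀ i, x i ≠ 0) :
    LinearIndependent R fun i => (span R {f | ∃ y : M, f = basE s y}).mkQ (basE (l i) (x i)) := by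
  classical
  have hker : span R {f | ∃ y : M, f = basE s y} ≤ LinearMap.ker (LinearMap.funLeft R M l) := by
    refine span_le.2 ?_
    rintro _ ⟨y, rfl⟩
    ext j
    simp [LinearMap.funLeft, basE_eq_single, hs j]
  refine LinearIndependent.of_comp ((span R _).liftQ _ hker) ?_
  convert Pi.linearIndependent_single_of_ne_zero (R := R) hx using 1
  · ext i j
    simp [LinearMap.funLeft, basE_eq_single, Pi.single_apply, hl.eq_iff]
  · rfl
end

theorem exBr_basE_basE (mul : Fin 4 → Fin 4 → Fin 4) {g : Type*} [LieRing g] (a b : Fin 4)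
    (x y : g) : exBr mul (basE a x) (basE b y) = basE (mul a b) ⁅x, y⁆ := by
  ext γ
  rw [exBr, Finset.sum_eq_single (a, b)]
  · simp [basE, eq_comm]
  · rintro ⟨c, d⟩ - hcd
    obtain hc | hd : c ≠ a ∨ d ≠ b := by simpa only [Ne, Prod.mk.injEq, not_and_or] using hcd
    · simp [basE, hc]
    · simp [basE, hd]
  · simp

theorem stmt10_general (K : Type*) [Field K] (g : Type*) [LieRing g] [LieAlgebra K g]
    (X₁ X₂ : g) (hli : LinearIndependent K ![X₁, X₂])
    (hbr : ⁅X₁, X₂⁆ = X₁) :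
    let Y₁ : Fin 4 → g := basE 0 X₁
    let Y₂ : Fin 4 → g := basE 2 X₁
    let Y₃ : Fin 4 → g := basE 1 X₂
    -- the ideal `λ4 ⊗ g` giving the `0_S`-reduction
    let I : Submodule K (Fin 4 → g) :=
      Submodule.span K {f | ∃ x : g, f = basE 3 x}
    -- the resonant subalgebra `(S₀ × V₀) ⊕ (S₁ × V₁)`
    let R : Submodule K (Fin 4 → g) :=
      Submodule.span K {basE 1 X₂, basE 3 X₂, basE 0 X₁, basE 2 X₁, basE 3 X₁}
    (exBr mulSN3 Y₁ Y₂ ∈ I) ∧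
    (exBr mulSN3 Y₁ Y₃ - Y₁ ∈ I) ∧
    (exBr mulSN3 Y₂ Y₃ - Y₂ ∈ I) ∧
    LinearIndependent K ![I.mkQ Y₁, I.mkQ Y₂, I.mkQ Y₃] ∧
    Submodule.span K {I.mkQ Y₁, I.mkQ Y₂, I.mkQ Y₃} = R.map I.mkQ := by
  intro Y₁ Y₂ Y₃ I R
  have hX₁ : X₁ ≠ 0 := by simpa using hli.ne_zero 0
  have hX₂ : X₂ ≠ 0 := by simpa using hli.ne_zero 1
  refine ⟨?_, ?_, ?_, ?_, ?_⟩
  · rw [exBr_basE_basE]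
    exact subset_span ⟨_, rfl⟩
  · rw [exBr_basE_basE, hbr, show mulSN3 0 1 = 0 from rfl, sub_self]
    exact zero_mem I
  · rw [exBr_basE_basE, hbr, show mulSN3 2 1 = 2 from rfl, sub_self]
    exact zero_mem I
  · have hY : ![I.mkQ Y₁, I.mkQ Y₂, I.mkQ Y₃] =
        fun i => I.mkQ (basE (![(0 : Fin 4), 2, 1] i) (![X₁, X₁, X₂] i)) := by
      ext i
      fin_cases i <;> rfl
    rw [hY]
    exact linearIndependent_mkQ_basE (by decide) (by decide)
      (by simp [Fin.forall_fin_succ, hX₁, hX₂])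
  · rw [map_span]
    have hI : ∀ x, I.mkQ (basE 3 x) = 0 := mkQ_basE_self 3
    simp only [Set.image_insert_eq, Set.image_singleton, hI]
    apply le_antisymm <;> refine span_le.2 ?_ <;>
      simp [Set.insert_subset_iff, mem_span_of_mem, Y₁, Y₂, Y₃]

/-- Let `g` be the 2-dimensional Lie algebra with `[X₁,X₂] = X₁`, graded by
`V₀ = span{X₂}`, `V₁ = span{X₁}`.  Using the semigroup `S_N3` with resonant
decomposition `S₀ = {λ2,λ4}`, `S₁ = {λ1,λ3,λ4}`, the `0_S`-reduced resonant
subalgebra has basis `Y₁ = λ1⊗X₁`, `Y₂ = λ3⊗X₁`, `Y₃ = λ2⊗X₂` satisfying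
`[Y₁,Y₂] = 0`, `[Y₁,Y₃] = Y₁`, `[Y₂,Y₃] = Y₂`, i.e. it is (isomorphic to) the
Bianchi type V algebra. -/
theorem stmt10 (K : Type*) [Field K] (g : Type*) [LieRing g] [LieAlgebra K g]
    (X₁ X₂ : g) (hli : LinearIndependent K ![X₁, X₂])
    (hspan : Submodule.span K {X₁, X₂} = ⊤)
    (hbr : ⁅X₁, X₂⁆ = X₁) :
    let Y₁ : Fin 4 → g := basE 0 X₁
    let Y₂ : Fin 4 → g := basE 2 X₁
    let Y₃ : Fin 4 → g := basE 1 X₂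
    -- the ideal `λ4 ⊗ g` giving the `0_S`-reduction
    let I : Submodule K (Fin 4 → g) :=
      Submodule.span K {f | ∃ x : g, f = basE 3 x}
    -- the resonant subalgebra `(S₀ × V₀) ⊕ (S₁ × V₁)`
    let R : Submodule K (Fin 4 → g) :=
      Submodule.span K {basE 1 X₂, basE 3 X₂, basE 0 X₁, basE 2 X₁, basE 3 X₁}
    (exBr mulSN3 Y₁ Y₂ ∈ I) ∧
    (exBr mulSN3 Y₁ Y₃ - Y₁ ∈ I) ∧
    (exBr mulSN3 Y₂ Y₃ - Y₂ ∈ I) ∧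
    LinearIndependent K ![I.mkQ Y₁, I.mkQ Y₂, I.mkQ Y₃] ∧
    Submodule.span K {I.mkQ Y₁, I.mkQ Y₂, I.mkQ Y₃} = R.map I.mkQ :=
  stmt10_general K g X₁ X₂ hli hbr
end

section
/- In any S-expanded algebra S × g of the 2-dimensional Lie algebra g with [X₁,X₂]=X₁ over a field K, the bracket of two basis elements λα⊗Xi and λβ⊗Xj is either 0 or equals ±(λαλβ)⊗X₁ with coefficient ±1. Consequently, there are no basis elements Y₁=λα⊗Xi, Y₂=λβ⊗Xj, Y₃=λγ⊗Xk and scalar h ∉ {0,1,−1} with [Y₁,Y₂]=0, [Y₁,Y₃]=Y₁, [Y₂,Y₃]=hY₂ where Y₂ is a (nonzero) basis element; i.e., the Bianchi type VI algebra with h ∉ {0,±1} cannot be realized on basis elements of an S-expansion of g. -/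
theorem exBracket_basE (S : Type*) [Mul S] [Fintype S] [DecidableEq S]
    (g : Type*) [LieRing g] (α β : S) (x y : g) :
    exBracket S g (basE α x) (basE β y) = basE (α * β) ⁅x, y⁆ := by
  funext γ
  simp only [exBracket, basE]
  rw [Finset.sum_eq_single (α, β)]
  · simp [eq_comm]
  · rintro ⟨a, b⟩ _ hne
    by_cases ha : a = α <;> by_cases hb : b = β <;> simp_all
  · simp

theorem basE_eq_zero {S : Type*} [DecidableEq S] {g : Type*}
    [AddCommGroup g] {l : S} {x : g} (hx : x = 0) : basE l x = 0 := by
  funext μ; simp [basE, hx]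

/-- In any `S`-expanded algebra of the 2-dimensional Lie algebra with
`[X₁,X₂] = X₁` over a field `K`, the bracket of two basis elements is `0` or
`±(λαλβ)⊗X₁`.  Consequently there are no basis elements `Y₁, Y₂, Y₃` and a
scalar `h ∉ {0, 1, -1}` with `[Y₁,Y₂]=0`, `[Y₁,Y₃]=Y₁`, `[Y₂,Y₃]=h•Y₂` and `Y₂`
nonzero: the Bianchi type VI algebra with `h ∉ {0, ±1}` cannot be realized on
basis elements of an `S`-expansion. -/
theorem stmt14 (K : Type*) [Field K] (g : Type*) [LieRing g] [LieAlgebra K g]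
    (X₁ X₂ : g) (hli : LinearIndependent K ![X₁, X₂]) (hbr : ⁅X₁, X₂⁆ = X₁)
    (S : Type*) [CommSemigroup S] [Fintype S] [DecidableEq S] :
    let v : Fin 2 → g := ![X₁, X₂]
    (∀ (α β : S) (i j : Fin 2),
      exBracket S g (basE α (v i)) (basE β (v j)) = 0 ∨
      exBracket S g (basE α (v i)) (basE β (v j)) = basE (α * β) X₁ ∨
      exBracket S g (basE α (v i)) (basE β (v j)) = - basE (α * β) X₁) ∧
    ¬ ∃ (α β γ : S) (i j k : Fin 2) (h : K),
      h ≠ 0 ∧ h ≠ 1 ∧ h ≠ -1 ∧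
      (basE β (v j) : S → g) ≠ 0 ∧
      exBracket S g (basE α (v i)) (basE β (v j)) = 0 ∧
      exBracket S g (basE α (v i)) (basE γ (v k)) = basE α (v i) ∧
      exBracket S g (basE β (v j)) (basE γ (v k)) = h • basE β (v j) := by
  intro v
  obtain ⟨hX2, hpair⟩ := linearIndependent_fin2.mp hli
  have hX1 : X₁ ≠ 0 := by
    intro h0
    exact hpair 0 (by simp [h0])
  have hbr' : ∀ i j : Fin 2, ⁅v i, v j⁆ = 0 ∨ ⁅v i, v j⁆ = X₁ ∨ ⁅v i, v j⁆ = -X₁ := by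
    intro i j
    fin_cases i <;> fin_cases j <;> simp [v, hbr, ← lie_skew X₂ X₁]
  constructor
  · intro α β i j
    rw [exBracket_basE]
    rcases hbr' i j with h | h | h
    · exact Or.inl (basE_eq_zero h)
    · exact Or.inr (Or.inl (by rw [h]))
    · refine Or.inr (Or.inr ?_)
      funext μ
      simp only [basE, h, Pi.neg_apply]
      split <;> simp
  · rintro ⟨α, β, γ, i, j, k, h, h0, h1, hm1, hne, -, -, heq3⟩
    rw [exBracket_basE] at heq3
    have hvj : v j ≠ 0 := by
      intro hz
      exact hne (basE_eq_zero hz)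
    -- evaluate at β
    have hβ := congrFun heq3 β
    simp only [basE, Pi.smul_apply, if_pos rfl, if_true] at hβ
    by_cases hc : β = β * γ
    · rw [if_pos hc] at hβ
      -- ⁅v j, v k⁆ = h • v j
      rcases hbr' j k with hb | hb | hb
      · rw [hb] at hβ
        exact hvj (by simpa [h0] using (smul_eq_zero.mp hβ.symm).resolve_left h0)
      · -- X₁ = h • v j
        rw [hb] at hβ
        fin_cases j <;> simp only [v, Fin.mk_zero, Fin.mk_one, Matrix.cons_val_zero, Matrix.cons_val_one,
          Matrix.head_cons] at hβ
        · -- X₁ = h • X₁ ⇒ h = 1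
          have : (h - 1) • X₁ = 0 := by
            simp [sub_smul, ← hβ]
          exact h1 (by simpa [sub_eq_zero] using (smul_eq_zero.mp this).resolve_right hX1)
        · -- X₁ = h • X₂ contradicts linear independence
          exact hpair h (by simpa using hβ.symm)
      · rw [hb] at hβ
        fin_cases j <;> simp only [v, Fin.mk_zero, Fin.mk_one, Matrix.cons_val_zero, Matrix.cons_val_one,
          Matrix.head_cons] at hβ
        · have : (h + 1) • X₁ = 0 := by
            simp [add_smul, ← hβ]
          exact hm1 (by simpa [eq_neg_iff_add_eq_zero] using
            (smul_eq_zero.mp this).resolve_right hX1)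
        · exact hpair (-h) (by
            simpa [neg_smul, neg_eq_iff_eq_neg] using hβ.symm)
    · rw [if_neg hc] at hβ
      exact hvj ((smul_eq_zero.mp hβ.symm).resolve_left h0)
end
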